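/- arXiv:1503.02948 — 8 statements merged into one kernel-verified Lean document; each statement's English description precedes it below -/
import Mathlib

section
/- Let a, d, k, b be integers with a > 0 and d > 0, and define B = ⌈(d * ⌈(a*b + k)/d⌉ - k) / a⌉ (ceilings of rational divisions). Then for every integer e with b ≤ e < B, d does not divide a*e + k. -/
/-
If `d ∣ a * e + k` with `e ≥ b`, then `a * e + k = d * m` where `m ≥ (a * b + k) / d`, so
`m ≥ C := ⌈(a * b + k) / d⌉`; hence `a * e = d * m - k ≥ d * C - k` and `e ≥ ⌈(d * C - k) / a⌉`.
-/

theorem Int.ceil_intCast_div_le_iff {K : Type*} [Field K] [LinearOrder K] [IsStrictOrderedRing K]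
    [FloorRing K] {n d m : ℤ} (hd : 0 < d) : ⌈(n : K) / d⌉ ≤ m ↔ n ≤ d * m := by
  rw [Int.ceil_le, div_le_iff₀ (by exact_mod_cast hd), mul_comm]
  exact_mod_cast Iff.rfl

theorem stmt_4 (a d k b : ℤ) (ha : 0 < a) (hd : 0 < d) :
    ∀ e : ℤ, b ≤ e →
      e < ⌈((d * ⌈((a * b + k : ℤ) : ℚ) / (d : ℚ)⌉ - k : ℤ) : ℚ) / (a : ℚ)⌉ →
      ¬ d ∣ a * e + k := by
  rintro e hbe hlt ⟨m, hm⟩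
  set C := ⌈((a * b + k : ℤ) : ℚ) / (d : ℚ)⌉
  have hCm : C ≤ m := (Int.ceil_intCast_div_le_iff hd).2 <| by
    have := mul_le_mul_of_nonneg_left hbe ha.le
    omega
  have hBe : ⌈((d * C - k : ℤ) : ℚ) / (a : ℚ)⌉ ≤ e := (Int.ceil_intCast_div_le_iff ha).2 <| by
    have := mul_le_mul_of_nonneg_left hCm hd.le
    omega
  omega
end

section
/- Let a, d, k, b be integers with a > 0 and d > 0, and define B = ⌊(d * ⌊(a*b + k)/d⌋ - k) / a⌋ (floors of rational divisions). Then for every integer e with B < e ≤ b, d does not divide a*e + k. -/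
/-! Write `a * e + k = d * q`. Since `e ≤ b`, the multiple `d * q` of `d` is at most `a * b + k`,
hence at most the largest such multiple `d * ⌊(a * b + k) / d⌋`; subtracting `k` and dividing
by `a` gives `e ≤ B`. -/

theorem Int.floor_intCast_div_intCast_of_nonneg {K : Type*} [Field K] [LinearOrder K]
    [IsOrderedRing K] [FloorRing K] (m : ℤ) {n : ℤ} (hn : 0 ≤ n) :
    ⌊(m : K) / n⌋ = m / n := by
  rw [Int.floor_div_cast_of_nonneg hn, Int.floor_intCast]

theorem Int.mul_le_mul_ediv_of_mul_le {d q n : ℤ} (hd : 0 < d) (h : d * q ≤ n) :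
    d * q ≤ d * (n / d) :=
  mul_le_mul_of_nonneg_left ((Int.le_ediv_iff_mul_le hd).mpr (by linarith)) hd.le

theorem le_ediv_of_dvd_of_le {a d k b e : ℤ} (ha : 0 < a) (hd : 0 < d) (heb : e ≤ b)
    (hdvd : d ∣ a * e + k) : e ≤ (d * ((a * b + k) / d) - k) / a := by
  obtain ⟨q, hq⟩ := hdvd
  have hmul : d * q ≤ d * ((a * b + k) / d) :=
    Int.mul_le_mul_ediv_of_mul_le hd (by nlinarith)
  exact (Int.le_ediv_iff_mul_le ha).mpr (by linarith)

theorem stmt_5 (a d k b : ℤ) (ha : 0 < a) (hd : 0 < d) :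
    ∀ e : ℤ, e ≤ b →
      ⌊((d * ⌊((a * b + k : ℤ) : ℚ) / (d : ℚ)⌋ - k : ℤ) : ℚ) / (a : ℚ)⌋ < e →
      ¬ d ∣ a * e + k := by
  intro e heb hlt hdvd
  rw [Int.floor_intCast_div_intCast_of_nonneg _ hd.le,
    Int.floor_intCast_div_intCast_of_nonneg _ ha.le] at hlt
  exact hlt.not_ge (le_ediv_of_dvd_of_le ha hd heb hdvd)
end

section
/- Let a, b, c, d, p, q, s be integers with a > 0, b > 0, c > 0, d > 0, and let m = lcm(a, a*d / gcd(a*d, c)) - 1. Then (∃ x : ℤ, -a*x + p ≤ 0 ∧ b*x - q ≤ 0 ∧ d ∣ c*x + s) ↔ (∃ k : ℤ, 0 ≤ k ∧ k ≤ m ∧ b*p - a*q + b*k ≤ 0 ∧ a ∣ k + p ∧ a*d ∣ c*p + a*s + c*k). -/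
/-!
Writing `k = a * x - p` turns the two bounds and the divisibility of the `k`-system into
`b * x ≤ q` and `d ∣ c * x + s` multiplied by `a`, while `a ∣ k + p` says that `k` comes from an
integer `x`. The bound `k ≤ m` is the only real restriction: shifting `x` by `T = L / a`, where
`L = lcm(a, a d / gcd(a d, c))`, preserves `d ∣ c * x + s` (as `a d ∣ c * L`), moves `k` by `L`,
and can only decrease `b * x`, so a solution with `p ≤ a * x` can be pushed down until
`0 ≤ a * x - p < L`.
-/

theorem Int.dvd_mul_ediv_gcd (n c : ℤ) : n ∣ c * (n / n.gcd c) := by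
  obtain ⟨c', hc'⟩ := Int.gcd_dvd_right n c
  refine ⟨c', ?_⟩
  nth_rewrite 1 [hc']
  rw [mul_comm _ c', mul_assoc, Int.mul_ediv_cancel' (Int.gcd_dvd_left n c), mul_comm]

section Resolvent

variable {a b c d p q s : ℤ}

theorem lcm_ediv_gcd_pos (ha : a ≠ 0) (hd : d ≠ 0) :
    0 < (Int.lcm a (a * d / (Int.gcd (a * d) c : ℤ)) : ℤ) := by
  have had : a * d ≠ 0 := mul_ne_zero ha hd
  refine Int.natCast_pos.mpr (Int.lcm_pos ha fun h => had ?_)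
  rw [← Int.mul_ediv_cancel' (Int.gcd_dvd_left (a * d) c), h, mul_zero]

theorem dvd_mul_lcm_ediv_gcd_ediv (ha : a ≠ 0) :
    d ∣ c * ((Int.lcm a (a * d / (Int.gcd (a * d) c : ℤ)) : ℤ) / a) := by
  set L : ℤ := (Int.lcm a (a * d / (Int.gcd (a * d) c : ℤ)) : ℤ)
  have hadcL : a * d ∣ c * L :=
    (Int.dvd_mul_ediv_gcd _ c).trans (mul_dvd_mul_left c (Int.dvd_lcm_right _ _))
  have haL : a * (L / a) = L := Int.mul_ediv_cancel' (Int.dvd_lcm_left _ _)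
  rw [← haL, mul_left_comm] at hadcL
  exact (mul_dvd_mul_iff_left ha).mp hadcL

theorem exists_solution_sub_mem_Ico {L : ℤ} (ha : 0 < a) (hb : 0 ≤ b) (hL : 0 < L)
    (haL : a ∣ L) (hdL : d ∣ c * (L / a)) {x : ℤ} (hpx : p ≤ a * x) (hxq : b * x ≤ q)
    (hdx : d ∣ c * x + s) :
    ∃ y : ℤ, 0 ≤ a * y - p ∧ a * y - p < L ∧ b * y ≤ q ∧ d ∣ c * y + s := by
  set t := (a * x - p) / L
  have ht : 0 ≤ t := Int.ediv_nonneg (by linarith) hL.le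
  have hay : a * (x - L / a * t) - p = (a * x - p) % L := by
    rw [Int.emod_def, mul_sub, ← mul_assoc, Int.mul_ediv_cancel' haL]
    ring
  refine ⟨x - L / a * t, ?_, ?_, ?_, ?_⟩
  · exact hay ▸ Int.emod_nonneg _ hL.ne'
  · exact hay ▸ Int.emod_lt_of_pos _ hL
  · have hshift : 0 ≤ L / a * t := mul_nonneg (Int.ediv_nonneg hL.le ha.le) ht
    calc b * (x - L / a * t) ≤ b * x := mul_le_mul_of_nonneg_left (by linarith) hb
      _ ≤ q := hxq
  · have hcy : c * (x - L / a * t) + s = c * x + s - c * (L / a) * t := by ring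
    exact hcy ▸ dvd_sub hdx (hdL.mul_right t)

theorem resolvent_conditions_iff (ha : 0 < a) (x : ℤ) :
    (b * p - a * q + b * (a * x - p) ≤ 0 ∧ a * d ∣ c * p + a * s + c * (a * x - p)) ↔
      (b * x ≤ q ∧ d ∣ c * x + s) := by
  have hle : b * p - a * q + b * (a * x - p) = a * (b * x) - a * q := by ring
  have hdvd : c * p + a * s + c * (a * x - p) = a * (c * x + s) := by ring
  rw [hle, sub_nonpos, mul_le_mul_iff_right₀ ha, hdvd, mul_dvd_mul_iff_left ha.ne']

end Resolvent

theorem stmt_7_general (a b c d p q s : ℤ) (ha : 0 < a) (hb : 0 < b) (hd : 0 < d)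
    (m : ℤ) (hm : m = Int.lcm a ((a * d) / (Int.gcd (a * d) c : ℤ)) - 1) :
    (∃ x : ℤ, -a * x + p ≤ 0 ∧ b * x - q ≤ 0 ∧ d ∣ c * x + s) ↔
    (∃ k : ℤ, 0 ≤ k ∧ k ≤ m ∧ b * p - a * q + b * k ≤ 0 ∧ a ∣ k + p ∧
      a * d ∣ c * p + a * s + c * k) := by
  subst hm
  constructor
  · rintro ⟨x, hpx, hxq, hdx⟩
    obtain ⟨y, hy0, hyL, hyq, hdy⟩ :=
      exists_solution_sub_mem_Ico (p := p) (q := q) ha hb.le (lcm_ediv_gcd_pos ha.ne' hd.ne')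
        (Int.dvd_lcm_left _ _) (dvd_mul_lcm_ediv_gcd_ediv ha.ne') (by linarith) (by linarith) hdx
    obtain ⟨hle, hdvd⟩ := (resolvent_conditions_iff ha y).mpr ⟨hyq, hdy⟩
    exact ⟨a * y - p, hy0, by linarith, hle, ⟨y, by ring⟩, hdvd⟩
  · rintro ⟨k, hk, -, hle, ⟨x, hx⟩, hdvd⟩
    obtain rfl : k = a * x - p := by linarith
    obtain ⟨hxq, hdx⟩ := (resolvent_conditions_iff ha x).mp ⟨hle, hdvd⟩
    exact ⟨x, by linarith, by linarith, hdx⟩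

theorem stmt_7 (a b c d p q s : ℤ) (ha : 0 < a) (hb : 0 < b) (hc : 0 < c) (hd : 0 < d)
    (m : ℤ) (hm : m = Int.lcm a ((a * d) / (Int.gcd (a * d) c : ℤ)) - 1) :
    (∃ x : ℤ, -a * x + p ≤ 0 ∧ b * x - q ≤ 0 ∧ d ∣ c * x + s) ↔
    (∃ k : ℤ, 0 ≤ k ∧ k ≤ m ∧ b * p - a * q + b * k ≤ 0 ∧ a ∣ k + p ∧
      a * d ∣ c * p + a * s + c * k) :=
  stmt_7_general a b c d p q s ha hb hd m hm
end

section
/- Let a, b, c, d, p, q, s, k be integers with a > 0, b > 0, c > 0, d > 0. If 0 ≤ k, b*p - a*q + b*k ≤ 0, a ∣ k + p, and a*d ∣ c*p + a*s + c*k, then x := (k + p) / a is an integer satisfying -a*x + p ≤ 0, b*x - q ≤ 0, and d ∣ c*x + s. -/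
namespace Int

theorem mul_ediv_le_of_mul_le_mul {a b n q : ℤ} (ha : 0 < a) (han : a ∣ n)
    (h : b * n ≤ a * q) : b * (n / a) ≤ q := by
  refine le_of_mul_le_mul_left ?_ ha
  rwa [mul_left_comm, Int.mul_ediv_cancel' han]

theorem dvd_mul_ediv_add_of_mul_dvd {a c d n s : ℤ} (ha : a ≠ 0) (han : a ∣ n)
    (h : a * d ∣ c * n + a * s) : d ∣ c * (n / a) + s := by
  have hscaled : a * (c * (n / a) + s) = c * n + a * s := by
    rw [mul_add, mul_left_comm, Int.mul_ediv_cancel' han]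
  rw [← mul_dvd_mul_iff_left ha, hscaled]
  exact h

end Int

theorem stmt_8_general (a b c d p q s k : ℤ) (ha : 0 < a)
    (hk0 : 0 ≤ k) (hineq : b * p - a * q + b * k ≤ 0) (hdiva : a ∣ k + p)
    (hdivad : a * d ∣ c * p + a * s + c * k) :
    -a * ((k + p) / a) + p ≤ 0 ∧ b * ((k + p) / a) - q ≤ 0 ∧ d ∣ c * ((k + p) / a) + s := by
  have hx : a * ((k + p) / a) = k + p := Int.mul_ediv_cancel' hdiva
  refine ⟨by linarith, ?_, ?_⟩
  · have hb : b * ((k + p) / a) ≤ q :=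
      Int.mul_ediv_le_of_mul_le_mul ha hdiva (by linarith)
    linarith
  · refine Int.dvd_mul_ediv_add_of_mul_dvd ha.ne' hdiva ?_
    convert hdivad using 1
    ring

theorem stmt_8 (a b c d p q s k : ℤ) (ha : 0 < a) (hb : 0 < b) (hc : 0 < c) (hd : 0 < d)
    (hk0 : 0 ≤ k) (hineq : b * p - a * q + b * k ≤ 0) (hdiva : a ∣ k + p)
    (hdivad : a * d ∣ c * p + a * s + c * k) :
    -a * ((k + p) / a) + p ≤ 0 ∧ b * ((k + p) / a) - q ≤ 0 ∧ d ∣ c * ((k + p) / a) + s :=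
  stmt_8_general a b c d p q s k ha hk0 hineq hdiva hdivad
end

section
/- Let a, b, c, d, p, q, s be integers with a > 0, b > 0, c > 0, d > 0, and suppose x is an integer satisfying -a*x + p ≤ 0, b*x - q ≤ 0, and d ∣ c*x + s. Then there exists an integer k with 0 ≤ k ≤ lcm(a, a*d/gcd(a*d,c)) - 1, b*p - a*q + b*k ≤ 0, a ∣ k + p, and a*d ∣ c*p + a*s + c*k. -/
theorem stmt_9 (a b c d p q s x : ℤ) (ha : 0 < a) (hb : 0 < b) (hc : 0 < c) (hd : 0 < d)
    (h1 : -a * x + p ≤ 0) (h2 : b * x - q ≤ 0) (h3 : d ∣ c * x + s) :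
    ∃ k : ℤ, 0 ≤ k ∧ k ≤ Int.lcm a ((a * d) / (Int.gcd (a * d) c : ℤ)) - 1 ∧
      b * p - a * q + b * k ≤ 0 ∧ a ∣ k + p ∧ a * d ∣ c * p + a * s + c * k := by
  set g : ℤ := (Int.gcd (a * d) c : ℤ) with hg
  set e : ℤ := (a * d) / g with he
  have had : 0 < a * d := mul_pos ha hd
  have hgdvd : g ∣ a * d := Int.gcd_dvd_left (a * d) c
  have hgdvdc : g ∣ c := Int.gcd_dvd_right (a * d) c
  have hgnz : Int.gcd (a * d) c ≠ 0 := by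
    intro h
    rw [Int.gcd_eq_zero_iff] at h
    omega
  have hg0 : 0 < g := by
    rw [hg]
    exact_mod_cast Nat.pos_of_ne_zero hgnz
  have he0 : 0 < e := Int.ediv_pos_of_pos_of_dvd had hg0.le hgdvd
  set m : ℤ := (Int.lcm a e : ℤ) with hm
  have hm0 : 0 < m := by
    have hne : Int.lcm a e ≠ 0 := by
      rw [Int.lcm]
      exact Nat.lcm_ne_zero (by simpa using ha.ne') (by simpa using he0.ne')
    rw [hm]
    exact_mod_cast Nat.pos_of_ne_zero hne
  set t : ℤ := a * x - p with ht
  have ht0 : 0 ≤ t := by nlinarith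
  have hdiv : m * (t / m) + t % m = t := Int.mul_ediv_add_emod t m
  have hdvd : m ∣ t - t % m := ⟨t / m, by linarith⟩
  have hma : a ∣ m := Int.dvd_lcm_left a e
  have hme : e ∣ m := Int.dvd_lcm_right a e
  refine ⟨t % m, Int.emod_nonneg t hm0.ne', ?_, ?_, ?_, ?_⟩
  · have := Int.emod_lt_of_pos t hm0
    omega
  · have hq : 0 ≤ t / m := Int.ediv_nonneg ht0 hm0.le
    have hk : t % m ≤ t := by nlinarith
    nlinarith [mul_le_mul_of_nonneg_left h2 ha.le]
  · have h5 : a ∣ t - t % m := hma.trans hdvd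
    have heq : (t % m) + p = a * x - (t - t % m) := by rw [ht]; ring
    rw [heq]
    exact dvd_sub ⟨x, rfl⟩ h5
  · have h6 : a * d ∣ c * e := by
      obtain ⟨u, hu⟩ := hgdvdc
      have hmul : e * g = a * d := Int.ediv_mul_cancel hgdvd
      exact ⟨u, by rw [hu]; linear_combination u * hmul⟩
    have h7 : a * d ∣ c * (t - t % m) :=
      h6.trans (mul_dvd_mul_left c (hme.trans hdvd))
    have h8 : a * d ∣ a * (c * x + s) := mul_dvd_mul_left a h3
    have heq : c * p + a * s + c * (t % m) = a * (c * x + s) - c * (t - t % m) := by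
      rw [ht]; ring
    rw [heq]
    exact dvd_sub h8 h7
end

section
/- Let a₁, a₂, d₁, d₂, p₁, p₂ be integers with a₁ > 0, a₂ > 0, d₁ > 0, d₂ > 0. Let d = gcd(a₁*d₂, a₂*d₁) and let c₁, c₂ be integers with c₁*a₁*d₂ + c₂*a₂*d₁ = d. Then for every integer x: (d₁ ∣ a₁*x + p₁ ∧ d₂ ∣ a₂*x + p₂) ↔ (d₁*d₂ ∣ d*x + c₁*d₂*p₁ + c₂*d₁*p₂ ∧ d ∣ -a₁*p₂ + a₂*p₁). -/
/-!
Write `y₁ = a₁ x + p₁`, `y₂ = a₂ x + p₂`. By Bézout the new constraints are on the combinations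
`M = d x + c₁ d₂ p₁ + c₂ d₁ p₂ = c₁ d₂ y₁ + c₂ d₁ y₂` and `N = -a₁ p₂ + a₂ p₁ = a₂ y₁ - a₁ y₂`,
which gives `→`. Conversely `d y₁ = a₁ M + c₂ d₁ N` and `d y₂ = a₂ M - c₁ d₂ N`, where every term is
divisible by `d d₁` (resp. `d d₂`); cancelling `d ≠ 0` gives `←`.
-/

theorem dvd_of_mul_eq_of_dvd {a c d d₁ d₂ y M N : ℤ} (hd : d ≠ 0) (ha : d ∣ a * d₂)
    (hM : d₁ * d₂ ∣ M) (hN : d ∣ N) (h : d * y = a * M + c * d₁ * N) : d₁ ∣ y := by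
  rw [← mul_dvd_mul_iff_left hd, h]
  obtain ⟨u, hu⟩ := ha
  obtain ⟨m, rfl⟩ := hM
  obtain ⟨e, rfl⟩ := hN
  exact dvd_add ⟨u * m, by linear_combination d₁ * m * hu⟩ ⟨c * e, by ring⟩

theorem dvd_and_dvd_iff_of_bezout {a₁ a₂ d₁ d₂ p₁ p₂ c₁ c₂ d : ℤ} (hd : d ≠ 0)
    (h₁ : d ∣ a₁ * d₂) (h₂ : d ∣ a₂ * d₁) (hbezout : c₁ * a₁ * d₂ + c₂ * a₂ * d₁ = d) (x : ℤ) :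
    (d₁ ∣ a₁ * x + p₁ ∧ d₂ ∣ a₂ * x + p₂) ↔
      (d₁ * d₂ ∣ d * x + c₁ * d₂ * p₁ + c₂ * d₁ * p₂ ∧ d ∣ -a₁ * p₂ + a₂ * p₁) := by
  constructor
  · rintro ⟨⟨k₁, hk₁⟩, ⟨k₂, hk₂⟩⟩
    refine ⟨⟨c₁ * k₁ + c₂ * k₂, by linear_combination c₁ * d₂ * hk₁ + c₂ * d₁ * hk₂ - x * hbezout⟩, ?_⟩
    have hN : -a₁ * p₂ + a₂ * p₁ = a₂ * d₁ * k₁ - a₁ * d₂ * k₂ := by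
      linear_combination a₂ * hk₁ - a₁ * hk₂
    exact hN ▸ dvd_sub (h₂.mul_right k₁) (h₁.mul_right k₂)
  · rintro ⟨hM, hN⟩
    refine ⟨dvd_of_mul_eq_of_dvd (c := c₂) hd h₁ hM hN ?_,
      dvd_of_mul_eq_of_dvd (c := -c₁) hd h₂ (mul_comm d₁ d₂ ▸ hM) hN ?_⟩
    · linear_combination -p₁ * hbezout
    · linear_combination -p₂ * hbezout

theorem stmt_10_general (a₁ a₂ d₁ d₂ p₁ p₂ c₁ c₂ : ℤ)
    (ha₁ : 0 < a₁) (hd₂ : 0 < d₂)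
    (d : ℤ) (hdef : d = Int.gcd (a₁ * d₂) (a₂ * d₁))
    (hbezout : c₁ * a₁ * d₂ + c₂ * a₂ * d₁ = d) :
    ∀ x : ℤ, (d₁ ∣ a₁ * x + p₁ ∧ d₂ ∣ a₂ * x + p₂) ↔
      (d₁ * d₂ ∣ d * x + c₁ * d₂ * p₁ + c₂ * d₁ * p₂ ∧ d ∣ -a₁ * p₂ + a₂ * p₁) := by
  subst hdef
  have hd : (Int.gcd (a₁ * d₂) (a₂ * d₁) : ℤ) ≠ 0 := by
    exact_mod_cast (Int.gcd_pos_of_ne_zero_left _ (mul_pos ha₁ hd₂).ne').ne'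
  exact dvd_and_dvd_iff_of_bezout hd (Int.gcd_dvd_left _ _) (Int.gcd_dvd_right _ _) hbezout

theorem stmt_10 (a₁ a₂ d₁ d₂ p₁ p₂ c₁ c₂ : ℤ)
    (ha₁ : 0 < a₁) (ha₂ : 0 < a₂) (hd₁ : 0 < d₁) (hd₂ : 0 < d₂)
    (d : ℤ) (hdef : d = Int.gcd (a₁ * d₂) (a₂ * d₁))
    (hbezout : c₁ * a₁ * d₂ + c₂ * a₂ * d₁ = d) :
    ∀ x : ℤ, (d₁ ∣ a₁ * x + p₁ ∧ d₂ ∣ a₂ * x + p₂) ↔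
      (d₁ * d₂ ∣ d * x + c₁ * d₂ * p₁ + c₂ * d₁ * p₂ ∧ d ∣ -a₁ * p₂ + a₂ * p₁) :=
  stmt_10_general a₁ a₂ d₁ d₂ p₁ p₂ c₁ c₂ ha₁ hd₂ d hdef hbezout
end

section
/- Let a, b, p, q be integers with a > 0, b > 0, and let m = a - 1. Then (∃ x : ℤ, -a*x + p ≤ 0 ∧ b*x - q ≤ 0) ↔ (∃ k : ℤ, 0 ≤ k ∧ k ≤ m ∧ b*p - a*q + b*k ≤ 0 ∧ a ∣ k + p). -/
/-!
Substituting `k = a * t - p`, the right-hand side says that the unique `t` with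
`a * t - p ∈ [0, a - 1]`, namely `t = ⌈p / a⌉`, satisfies `b * t ≤ q`. Since `b > 0`, this
smallest solution of `p ≤ a * t` is also the best candidate for `b * t ≤ q`.
-/

namespace Int

variable {a b p q k t x : ℤ}

theorem exists_mul_mem_Icc (ha : 0 < a) (p : ℤ) :
    ∃ t, a * t ∈ Set.Icc p (p + (a - 1)) := by
  refine ⟨-((-p) / a), ?_, ?_⟩
  · linarith [Int.mul_ediv_self_le (x := -p) ha.ne']
  · linarith [Int.lt_mul_ediv_self_add (x := -p) ha]

theorem le_of_mul_le_add_sub_one (ha : 0 < a) (ht : a * t ≤ p + (a - 1)) (hx : p ≤ a * x) :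
    t ≤ x :=
  Int.lt_add_one_iff.mp <| lt_of_mul_lt_mul_left (by linarith) ha.le

theorem resolvent_nonpos_iff (ha : 0 < a) (ht : k + p = a * t) :
    b * p - a * q + b * k ≤ 0 ↔ b * t ≤ q := by
  have hfactor : b * p - a * q + b * k = a * (b * t - q) := by linear_combination b * ht
  rw [hfactor, mul_nonpos_iff_pos_imp_nonpos, sub_nonpos]
  exact ⟨fun h => h.1 ha, fun h => ⟨fun _ => h, fun _ => ha.le⟩⟩

end Int

theorem stmt_11 (a b p q : ℤ) (ha : 0 < a) (hb : 0 < b) :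
    (∃ x : ℤ, -a * x + p ≤ 0 ∧ b * x - q ≤ 0) ↔
    (∃ k : ℤ, 0 ≤ k ∧ k ≤ a - 1 ∧ b * p - a * q + b * k ≤ 0 ∧ a ∣ k + p) := by
  constructor
  · rintro ⟨x, hpx, hxq⟩
    obtain ⟨t, hpt, htp⟩ := Int.exists_mul_mem_Icc ha p
    have htx : t ≤ x := Int.le_of_mul_le_add_sub_one ha htp (by linarith)
    have htq : b * t ≤ q := (mul_le_mul_of_nonneg_left htx hb.le).trans (by linarith)
    exact ⟨a * t - p, by linarith, by linarith,
      (Int.resolvent_nonpos_iff ha (by ring)).mpr htq, ⟨t, by ring⟩⟩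
  · rintro ⟨k, hk, -, hres, t, ht⟩
    exact ⟨t, by linarith, by linarith [(Int.resolvent_nonpos_iff ha ht).mp hres]⟩
end

section
/- Let a, b, p, q, k be integers with a > 0, b > 0, a ∣ k + p, and b*p - a*q + b*k ≤ 0 and 0 ≤ k. Then the integer x = (k + p)/a satisfies ⌈p/a⌉ ≤ x ≤ ⌊q/b⌋. -/
/-! Writing `k + p = x * a`, the lower bound is `p ≤ k + p = x * a` (as `0 ≤ k`), and the upper
bound follows after multiplying `x * b ≤ q` by `a > 0`, where it reads `b * (k + p) ≤ a * q`. -/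

section IntCastDiv

variable {K : Type*} [Field K] [LinearOrder K] [IsStrictOrderedRing K] [FloorRing K]

theorem Int.ceil_intCast_div_le {a p x : ℤ} (ha : 0 < a) (h : p ≤ x * a) :
    ⌈(p : K) / a⌉ ≤ x := by
  rw [Int.ceil_le, div_le_iff₀ (by exact_mod_cast ha)]
  exact_mod_cast h

theorem Int.le_floor_intCast_div {b q x : ℤ} (hb : 0 < b) (h : x * b ≤ q) :
    x ≤ ⌊(q : K) / b⌋ := by
  rw [Int.le_floor, le_div_iff₀ (by exact_mod_cast hb)]
  exact_mod_cast h

end IntCastDiv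

theorem stmt_15 (a b p q k : ℤ) (ha : 0 < a) (hb : 0 < b)
    (hdiv : a ∣ k + p) (hineq : b * p - a * q + b * k ≤ 0) (hk0 : 0 ≤ k) :
    ⌈((p : ℚ)) / (a : ℚ)⌉ ≤ (k + p) / a ∧ (k + p) / a ≤ ⌊((q : ℚ)) / (b : ℚ)⌋ := by
  obtain ⟨x, hx⟩ := hdiv
  rw [hx, Int.mul_ediv_cancel_left _ ha.ne']
  have hupper : x * b ≤ q := by
    refine le_of_mul_le_mul_left ?_ ha
    linear_combination -b * hx + hineq
  exact ⟨Int.ceil_intCast_div_le ha (by linarith), Int.le_floor_intCast_div hb hupper⟩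
end
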